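/- arXiv:2409.07979 — 4 statements merged into one kernel-verified Lean document; each statement's English description precedes it below -/
import Mathlib

section
/- Let k ∈ ℕ and let Q = {q_1, q_2, …, q_k} be a family of non-constant integral polynomials with q_i(0) = 0 for every 1 ≤ i ≤ k. Then there exist 1 ≤ d ≤ k and a subfamily A = {p_1, …, p_d} ⊆ {q_1, …, q_k} such that A satisfies condition (♠) and {q_1, …, q_k} ⊆ {p_i^{[m]} : 1 ≤ i ≤ d, m ∈ ℤ}. -/
open Filter Topology Function Set

/-- Condition `(♠)` for a family `p = {p 0, …, p (d-1)}` of integral polynomials: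
all vanish at `0`; the first `s` of them are linear `pᵢ n = aᵢ n` with `a₀, …, a_{s-1}`
distinct nonzero integers; the remaining ones have degree at least `2`; and for distinct
nonlinear members, `p_j^{[k]} ≠ p_i^{[t]}` for all `k, t ∈ ℤ`, where
`p^{[j]} n = p (n + j) - p j`. -/
def SpadeCondition {d : ℕ} (p : Fin d → ℤ → ℤ) : Prop :=
  (∀ i, p i 0 = 0) ∧
  ∃ s : ℕ, s ≤ d ∧
    (∃ a : Fin d → ℤ,
      (∀ i : Fin d, (i : ℕ) < s → a i ≠ 0 ∧ ∀ n : ℤ, p i n = a i * n) ∧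
      (∀ i j : Fin d, (i : ℕ) < s → (j : ℕ) < s → i ≠ j → a i ≠ a j)) ∧
    (∀ i : Fin d, s ≤ (i : ℕ) →
      ∃ q : Polynomial ℚ, (∀ n : ℤ, (p i n : ℚ) = q.eval (n : ℚ)) ∧ 2 ≤ q.natDegree) ∧
    (∀ i j : Fin d, s ≤ (i : ℕ) → s ≤ (j : ℕ) → i ≠ j → ∀ k t : ℤ,
      (fun n : ℤ => p j (n + k) - p j k) ≠ (fun n : ℤ => p i (n + t) - p i t))

/-!
Being a shift of one another, `p' = p^{[m]}`, is an equivalence relation on functions vanishing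
at `0`, because `(p^{[m]})^{[m']} = p^{[m + m']}` and `p^{[0]} = p`. Take one representative of
each class met by `Q`, the linear ones first. A linear `n ↦ a n` is determined by `a`, so distinct
linear representatives have distinct slopes; a non-constant one that is not linear has degree at
least `2`; and `p_j^{[k]} = p_i^{[t]}` would put `p_i` and `p_j` in the same class.
-/

open Polynomial

/-- `shift p m` is `p^{[m]}`. -/
def shift (p : ℤ → ℤ) (m : ℤ) : ℤ → ℤ := fun n => p (n + m) - p m

theorem shift_zero {p : ℤ → ℤ} (h0 : p 0 = 0) : shift p 0 = p := by
  funext n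
  simp [shift, h0]

theorem shift_shift (p : ℤ → ℤ) (m m' : ℤ) : shift (shift p m) m' = shift p (m' + m) := by
  funext n
  simp only [shift, add_assoc]
  ring

theorem eq_shift_of_shift_eq {p p' : ℤ → ℤ} {m m' : ℤ} (h0 : p' 0 = 0)
    (h : shift p m = shift p' m') : p' = shift p (-m' + m) := by
  rw [← shift_shift, h, shift_shift, neg_add_cancel, shift_zero h0]

def shiftSetoid : Setoid {p : ℤ → ℤ // p 0 = 0} where
  r p p' := ∃ m, p'.1 = shift p.1 m
  iseqv :=
    { refl := fun p => ⟨0, (shift_zero p.2).symm⟩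
      symm := fun {p p'} ⟨m, h⟩ => ⟨-m, by rw [h, shift_shift, neg_add_cancel, shift_zero p.2]⟩
      trans := fun ⟨m, h⟩ ⟨m', h'⟩ => ⟨m' + m, by rw [h', h, shift_shift]⟩ }

theorem Setoid.exists_transversal_fin {α : Type*} [Finite α] (r : Setoid α) (L : α → Prop) :
    ∃ (d s : ℕ) (ι : Fin d → α), s ≤ d ∧ (∀ i : Fin d, (i : ℕ) < s ↔ L (ι i)) ∧
      (∀ i j, ι i ≈ ι j → i = j) ∧ ∀ x, ∃ i, ι i ≈ x := by
  classical
  have : Fintype (Quotient r) := Fintype.ofFinite _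
  let C := fun c : Quotient r => L c.out
  let e : Fin (Fintype.card {c // C c} + Fintype.card {c // ¬ C c}) ≃ Quotient r :=
    finSumFinEquiv.symm.trans <|
      ((Fintype.equivFin _).symm.sumCongr (Fintype.equivFin _).symm).trans (Equiv.sumCompl C)
  refine ⟨_, _, fun i => (e i).out, Nat.le_add_right _ _, ?_, ?_, ?_⟩
  · refine Fin.addCases (fun i => ?_) (fun i => ?_)
    · simpa [e] using ((Fintype.equivFin _).symm i).2
    · simpa [e] using ((Fintype.equivFin _).symm i).2
  · intro i j h
    exact e.injective (by simpa using Quotient.sound h)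
  · intro x
    exact ⟨e.symm ⟦x⟧, by simpa using Quotient.mk_out x⟩

theorem linear_or_two_le_natDegree {f : ℤ → ℤ} {Q : ℚ[X]}
    (hf : ∀ n : ℤ, (f n : ℚ) = Q.eval (n : ℚ)) (h0 : f 0 = 0) (hQ : 1 ≤ Q.natDegree) :
    (f 1 ≠ 0 ∧ ∀ n, f n = f 1 * n) ∨ 2 ≤ Q.natDegree := by
  refine or_iff_not_imp_right.2 fun hlt => ?_
  have hdeg : Q.natDegree = 1 := by omega
  have hQX : Q = C (Q.coeff 1) * X + C (Q.coeff 0) := eq_X_add_C_of_natDegree_le_one hdeg.le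
  have hc0 : Q.coeff 0 = 0 := by
    have := hf 0
    rw [hQX] at this
    simpa [h0] using this.symm
  have hf' : ∀ n : ℤ, (f n : ℚ) = Q.coeff 1 * n := fun n => by
    rw [hf, hQX]
    simp [hc0]
  have hc1 : Q.coeff 1 ≠ 0 := by
    have := leadingCoeff_ne_zero.2 (ne_zero_of_natDegree_gt hQ)
    rwa [leadingCoeff, hdeg] at this
  have h1 : (f 1 : ℚ) = Q.coeff 1 := by simpa using hf' 1
  refine ⟨fun h => hc1 (by simpa [h] using h1.symm), fun n => ?_⟩
  exact_mod_cast (by rw [hf', h1] : (f n : ℚ) = f 1 * n)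

/-- **Lemma 4.7 (HSY22-1).** Let `Q = {q 0, …, q (k-1)}` be a family of non-constant
integral polynomials vanishing at `0`. Then there are `1 ≤ d ≤ k` and a subfamily
`A = {p 0, …, p (d-1)} ⊆ Q` satisfying condition `(♠)` such that every member of `Q` is of
the form `p_i^{[m]}` for some `i` and `m ∈ ℤ`, where `p^{[m]} n = p (n + m) - p m`. -/
theorem exists_spade_subfamily (k : ℕ) (hk : 1 ≤ k) (q : Fin k → ℤ → ℤ)
    (hq : ∀ i, q i 0 = 0 ∧
      ∃ Q : Polynomial ℚ, (∀ n : ℤ, (q i n : ℚ) = Q.eval (n : ℚ)) ∧ 1 ≤ Q.natDegree) :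
    ∃ (d : ℕ), 1 ≤ d ∧ d ≤ k ∧ ∃ ι : Fin d → Fin k,
      SpadeCondition (fun i => q (ι i)) ∧
      ∀ j : Fin k, ∃ (i : Fin d) (m : ℤ),
        q j = fun n : ℤ => q (ι i) (n + m) - q (ι i) m := by
  let r : Setoid (Fin k) := shiftSetoid.comap fun i => ⟨q i, (hq i).1⟩
  obtain ⟨d, s, ι, hs, hlin, hrep, hcover⟩ :=
    r.exists_transversal_fin fun i => q i 1 ≠ 0 ∧ ∀ n, q i n = q i 1 * n
  have hι : Injective ι := fun i j h => hrep i j (h ▸ r.refl _)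
  refine ⟨d, (hcover ⟨0, hk⟩).choose.pos, by simpa using Fintype.card_le_of_injective ι hι, ι,
    ⟨fun i => (hq _).1, s, hs, ⟨fun i => q (ι i) 1, fun i hi => (hlin i).1 hi, ?_⟩, ?_, ?_⟩,
    hcover⟩
  · intro i j hi hj hij h
    refine hij (hrep i j ⟨0, ?_⟩)
    rw [shift_zero (hq _).1]
    funext n
    simp only [((hlin i).1 hi).2 n, ((hlin j).1 hj).2 n, h]
  · intro i hi
    obtain ⟨Q, hQ, hdeg⟩ := (hq (ι i)).2
    refine ⟨Q, hQ, (linear_or_two_le_natDegree hQ (hq _).1 hdeg).resolve_left fun h => ?_⟩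
    exact absurd ((hlin i).2 h) (not_lt.2 hi)
  · intro i j _ _ hij m m' h
    exact hij (hrep j i ⟨_, eq_shift_of_shift_eq (hq _).1 h⟩).symm
end

section
/- Every topological dynamical system (X,T) has an almost one to one zero dimensional extension: there is a topological dynamical system (X',T') with X' zero dimensional and an almost one to one factor map τ : (X',T') → (X,T). If in addition (X,T) is minimal, then (X',T') is minimal. -/
/-!
Choose open sets `U i` such that any two distinct points are separated as `x ∈ U i`,
`y ∉ closure (U i)`, and record the itinerary `(n, i) ↦ [T^n x ∈ U i]` of a point in the Cantor
space `ℤ × ℕ → Bool`. On the dense `Gδ` set of points whose orbit avoids every frontier of the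
`U i` the itinerary is continuous; the extension is the closure of its graph over that set, acted
on by `T × shift`. Over that set the fibres of the first projection are singletons, while the
second projection is injective because the `U i` separate points, so the extension embeds into
the Cantor space and is zero dimensional.
-/

open Filter Topology Function Set

/-- Iterates of a homeomorphism indexed by `ℕ`. -/
def hpowNat {X : Type*} [TopologicalSpace X] (T : X ≃ₜ X) : ℕ → X ≃ₜ X
  | 0 => Homeomorph.refl X
  | n + 1 => (hpowNat T n).trans T

/-- Iterates of a homeomorphism indexed by `ℤ`. -/
def hpowInt {X : Type*} [TopologicalSpace X] (T : X ≃ₜ X) : ℤ → X ≃ₜ X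
  | Int.ofNat n => hpowNat T n
  | Int.negSucc n => (hpowNat T (n + 1)).symm

/-- The `n`-th iterate (`n : ℤ`) of the homeomorphism `T`, as a map. -/
def hpow {X : Type*} [TopologicalSpace X] (T : X ≃ₜ X) (n : ℤ) : X → X :=
  ⇑(hpowInt T n)

/-- The (two-sided) orbit of `x` under the homeomorphism `T`. -/
def zorbit {X : Type*} [TopologicalSpace X] (T : X ≃ₜ X) (x : X) : Set X :=
  Set.range fun n : ℤ => hpow T n x

/-- `(X,T)` is a minimal t.d.s.: every orbit is dense. -/
def IsMinimalTDS {X : Type*} [TopologicalSpace X] (T : X ≃ₜ X) : Prop :=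
  ∀ x : X, Dense (zorbit T x)

/-- A continuous surjection intertwining the dynamics is almost one to one if the points
with singleton fibre over their image form a dense `Gδ` subset of the domain. -/
def AlmostOneToOne {A B : Type*} [TopologicalSpace A] [TopologicalSpace B] (f : A → B) : Prop :=
  ∃ A₀ : Set A, IsGδ A₀ ∧ Dense A₀ ∧ ∀ a ∈ A₀, f ⁻¹' {f a} = {a}

section FactorMap

variable {X Y Z : Type*} [TopologicalSpace X] [TopologicalSpace Y] [TopologicalSpace Z]

lemma hpowNat_eq_pow (T : X ≃ₜ X) (n : ℕ) : hpowNat T n = T ^ n := by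
  induction n with
  | zero => rfl
  | succ n ih => rw [pow_succ', ← ih]; rfl

lemma hpow_eq_zpow (T : X ≃ₜ X) (n : ℤ) : hpow T n = ⇑(T ^ n) := by
  cases n with
  | ofNat n => simp [hpow, hpowInt, hpowNat_eq_pow]
  | negSucc n => simp [hpow, hpowInt, hpowNat_eq_pow, zpow_negSucc]; rfl

lemma zorbit_eq_range_zpow (T : X ≃ₜ X) (x : X) :
    zorbit T x = range fun n : ℤ => (T ^ n) x := by
  simp only [zorbit, hpow_eq_zpow]

lemma Function.Semiconj.homeomorph_zpow {S : Y ≃ₜ Y} {T : X ≃ₜ X} {π : Y → X}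
    (h : Semiconj π S T) (n : ℤ) : Semiconj π ⇑(S ^ n) ⇑(T ^ n) := by
  induction n using Int.induction_on with
  | zero => exact Semiconj.id_right
  | succ n ih => rw [zpow_add_one, zpow_add_one]; exact ih.comp_right h
  | pred n ih =>
    rw [zpow_sub_one, zpow_sub_one]
    exact ih.comp_right (h.inverses_right S.apply_symm_apply T.symm_apply_apply)

lemma Function.Semiconj.image_zorbit {S : Y ≃ₜ Y} {T : X ≃ₜ X} {π : Y → X}
    (h : Semiconj π S T) (y : Y) : π '' zorbit S y = zorbit T (π y) := by
  simp only [zorbit_eq_range_zpow, ← range_comp]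
  exact congrArg range (funext fun n => (h.homeomorph_zpow n).eq y)

lemma AlmostOneToOne.comp_homeomorph {f : Y → X} (hf : AlmostOneToOne f) (g : Z ≃ₜ Y) :
    AlmostOneToOne (f ∘ g) := by
  obtain ⟨A, hA, hdense, hfiber⟩ := hf
  refine ⟨g ⁻¹' A, hA.preimage g.continuous, hdense.preimage g.isOpenMap, fun z hz => ?_⟩
  rw [preimage_comp, comp_apply, hfiber _ hz]
  ext; simp [g.injective.eq_iff]

/-- The closure of any orbit projects onto `X`, so it contains every point with a singleton
fibre. -/
lemma IsMinimalTDS.of_almostOneToOne [CompactSpace Y] [T2Space X] {S : Y ≃ₜ Y} {T : X ≃ₜ X}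
    {π : Y → X} (hT : IsMinimalTDS T) (hπ : Continuous π) (h : Semiconj π S T)
    (ha : AlmostOneToOne π) : IsMinimalTDS S := by
  intro y
  obtain ⟨A, -, hA, hfiber⟩ := ha
  have himage : π '' closure (zorbit S y) = univ := by
    refine eq_univ_of_univ_subset ((hT (π y)).closure_eq ▸ closure_minimal ?_ ?_)
    · exact h.image_zorbit y ▸ image_mono subset_closure
    · exact (isClosed_closure.isCompact.image hπ).isClosed
  have hA_sub : A ⊆ closure (zorbit S y) := fun a ha => by
    obtain ⟨m, hm, hma⟩ := himage.symm ▸ mem_univ (π a)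
    have hm_fiber : m ∈ π ⁻¹' {π a} := hma
    rw [hfiber a ha, mem_singleton_iff] at hm_fiber
    exact hm_fiber ▸ hm
  exact dense_closure.mp (hA.mono hA_sub)

end FactorMap

lemma exists_nat_isOpen_separating (X : Type*) [TopologicalSpace X] [T2Space X]
    [SecondCountableTopology X] :
    ∃ U : ℕ → Set X, (∀ i, IsOpen (U i)) ∧ ∀ x y, x ≠ y → ∃ i, x ∈ U i ∧ y ∉ closure (U i) := by
  obtain ⟨U, hU⟩ := TopologicalSpace.exists_seq_basis X
  refine ⟨U, fun i => hU.isOpen (mem_range_self i), fun x y hxy => ?_⟩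
  obtain ⟨V, W, hV, hW, hxV, hyW, hVW⟩ := t2_separation hxy
  obtain ⟨_, ⟨i, rfl⟩, hxU, hUV⟩ := hU.exists_subset_of_mem_open hxV hV
  refine ⟨i, hxU, fun hy => ?_⟩
  obtain ⟨z, hzW, hzU⟩ := mem_closure_iff.mp hy W hW hyW
  exact disjoint_left.mp hVW (hUV hzU) hzW

def itineraryShift : (ℤ × ℕ → Bool) ≃ₜ (ℤ × ℕ → Bool) where
  toFun a q := a (q.1 + 1, q.2)
  invFun a q := a (q.1 - 1, q.2)
  left_inv a := by simp
  right_inv a := by simp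
  continuous_toFun := by fun_prop
  continuous_invFun := by fun_prop

section Itinerary

variable {X : Type*} [TopologicalSpace X] (T : X ≃ₜ X) (U : ℕ → Set X)

open scoped Classical in
noncomputable def itinerary (x : X) : ℤ × ℕ → Bool := fun q => decide ((T ^ q.1) x ∈ U q.2)

lemma itinerary_eq_true_iff (x : X) (q : ℤ × ℕ) :
    itinerary T U x q = true ↔ (T ^ q.1) x ∈ U q.2 := by
  simp [itinerary]

lemma semiconj_itinerary : Semiconj (itinerary T U) T itineraryShift := fun x => by
  funext q
  simp [itinerary, itineraryShift, zpow_add_one]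

def frontierAvoiding : Set X := {x | ∀ q : ℤ × ℕ, (T ^ q.1) x ∉ frontier (U q.2)}

lemma frontierAvoiding_eq_iInter :
    frontierAvoiding T U = ⋂ q : ℤ × ℕ, (T ^ q.1) ⁻¹' (frontier (U q.2))ᶜ := by
  ext; simp [frontierAvoiding]

lemma isGδ_frontierAvoiding : IsGδ (frontierAvoiding T U) := by
  rw [frontierAvoiding_eq_iInter]
  exact .iInter fun q => (isClosed_frontier.isOpen_compl.preimage (T ^ q.1).continuous).isGδ

lemma dense_frontierAvoiding [BaireSpace X] (hU : ∀ i, IsOpen (U i)) :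
    Dense (frontierAvoiding T U) := by
  rw [frontierAvoiding_eq_iInter]
  refine dense_iInter_of_isOpen
    (fun q => isClosed_frontier.isOpen_compl.preimage (T ^ q.1).continuous) fun q => ?_
  have : Dense (frontier (U q.2))ᶜ := by
    rw [← interior_eq_empty_iff_dense_compl, ← frontier_compl]
    exact interior_frontier (hU q.2).isClosed_compl
  exact this.preimage (T ^ q.1).isOpenMap

lemma preimage_frontierAvoiding : T ⁻¹' frontierAvoiding T U = frontierAvoiding T U := by
  ext x
  simp only [frontierAvoiding, mem_preimage, mem_ofPred_eq, ← Homeomorph.mul_apply,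
    ← zpow_add_one]
  exact (Equiv.prodCongr (Equiv.addRight 1) (Equiv.refl ℕ)).forall_congr_right
    (q := fun q : ℤ × ℕ => (T ^ q.1) x ∉ frontier (U q.2))

def itineraryGraphClosure : Set (X × (ℤ × ℕ → Bool)) :=
  closure ((fun x => (x, itinerary T U x)) '' frontierAvoiding T U)

lemma image_itineraryGraphClosure :
    T.prodCongr itineraryShift '' itineraryGraphClosure T U = itineraryGraphClosure T U := by
  rw [itineraryGraphClosure, Homeomorph.image_closure, ← image_comp]
  have hgraph : T.prodCongr itineraryShift ∘ (fun x => (x, itinerary T U x)) =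
      (fun x => (x, itinerary T U x)) ∘ T :=
    funext fun x => Prod.ext rfl (semiconj_itinerary T U x).symm
  rw [hgraph, image_comp, ← preimage_frontierAvoiding, T.surjective.image_preimage,
    preimage_frontierAvoiding]

def itineraryGraphClosure.prodShift : itineraryGraphClosure T U ≃ₜ itineraryGraphClosure T U :=
  (T.prodCongr itineraryShift).sets
    (by rw [← image_itineraryGraphClosure, Homeomorph.preimage_image, image_itineraryGraphClosure])

variable {T U} in
lemma apply_mem_closure_of_mem_itineraryGraphClosure {p : X × (ℤ × ℕ → Bool)}
    (hp : p ∈ itineraryGraphClosure T U) (q : ℤ × ℕ) :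
    (T ^ q.1) p.1 ∈ closure {y | y ∈ U q.2 ↔ p.2 q = true} := by
  have hopen : IsOpen {r : X × (ℤ × ℕ → Bool) | r.2 q = p.2 q} :=
    (isOpen_discrete {p.2 q}).preimage (by fun_prop)
  refine map_mem_closure (f := fun r : X × (ℤ × ℕ → Bool) => (T ^ q.1) r.1) (by fun_prop)
    (hopen.inter_closure ⟨rfl, hp⟩) ?_
  rintro _ ⟨hq, x, -, rfl⟩
  rw [mem_ofPred_eq, ← itinerary_eq_true_iff, ← hq]

variable {T U} in
lemma apply_mem_closure_of_mem_itineraryGraphClosure_of_eq_true {p : X × (ℤ × ℕ → Bool)}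
    (hp : p ∈ itineraryGraphClosure T U) {q : ℤ × ℕ} (h : p.2 q = true) :
    (T ^ q.1) p.1 ∈ closure (U q.2) := by
  simpa [h] using apply_mem_closure_of_mem_itineraryGraphClosure hp q

variable {T U} in
lemma apply_notMem_of_mem_itineraryGraphClosure_of_eq_false {p : X × (ℤ × ℕ → Bool)}
    (hp : p ∈ itineraryGraphClosure T U) {q : ℤ × ℕ} (hU : IsOpen (U q.2))
    (h : p.2 q = false) : (T ^ q.1) p.1 ∉ U q.2 := by
  have hmem := apply_mem_closure_of_mem_itineraryGraphClosure hp q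
  simp only [h, Bool.false_eq_true, iff_false] at hmem
  rwa [← compl_def, hU.isClosed_compl.closure_eq] at hmem

lemma eq_itinerary_of_mem_itineraryGraphClosure (hU : ∀ i, IsOpen (U i))
    {p : X × (ℤ × ℕ → Bool)} (hp : p ∈ itineraryGraphClosure T U)
    (hx : p.1 ∈ frontierAvoiding T U) : p.2 = itinerary T U p.1 := by
  funext q
  rw [Bool.eq_iff_iff, itinerary_eq_true_iff]
  refine ⟨fun h => by_contra fun hnotMem => hx q ?_, fun h => by_contra fun hb => ?_⟩
  · exact ⟨apply_mem_closure_of_mem_itineraryGraphClosure_of_eq_true hp h,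
      by rwa [(hU q.2).interior_eq]⟩
  · exact apply_notMem_of_mem_itineraryGraphClosure_of_eq_false hp (hU q.2)
      (Bool.eq_false_iff.mpr hb) h

lemma injOn_snd_itineraryGraphClosure (hU : ∀ i, IsOpen (U i))
    (hsep : ∀ x y, x ≠ y → ∃ i, x ∈ U i ∧ y ∉ closure (U i)) :
    InjOn Prod.snd (itineraryGraphClosure T U) := by
  intro p hp p' hp' hsnd
  refine Prod.ext (by_contra fun hne => ?_) hsnd
  obtain ⟨i, hpU, hp'U⟩ := hsep _ _ hne
  cases hb : p.2 (0, i)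
  · exact apply_notMem_of_mem_itineraryGraphClosure_of_eq_false hp (hU i) hb (by simpa using hpU)
  · have hb' : p'.2 (0, i) = true := hsnd ▸ hb
    exact hp'U (by simpa using apply_mem_closure_of_mem_itineraryGraphClosure_of_eq_true hp' hb')

lemma image_fst_itineraryGraphClosure [CompactSpace X] [T2Space X] (hU : ∀ i, IsOpen (U i)) :
    Prod.fst '' itineraryGraphClosure T U = univ := by
  refine eq_univ_of_univ_subset ((dense_frontierAvoiding T U hU).closure_eq ▸ ?_)
  refine closure_minimal (fun x hx => ⟨_, subset_closure (mem_image_of_mem _ hx), rfl⟩) ?_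
  exact (isClosed_closure.isCompact.image continuous_fst).isClosed

lemma almostOneToOne_fst_itineraryGraphClosure (hU : ∀ i, IsOpen (U i)) :
    AlmostOneToOne fun p : itineraryGraphClosure T U => p.1.1 := by
  refine ⟨{p | p.1.1 ∈ frontierAvoiding T U},
    (isGδ_frontierAvoiding T U).preimage (continuous_fst.comp continuous_subtype_val),
    Subtype.dense_iff.mpr (closure_mono ?_), fun p hp => ?_⟩
  · rintro _ ⟨x, hx, rfl⟩
    exact ⟨⟨_, subset_closure (mem_image_of_mem _ hx)⟩, hx, rfl⟩
  · ext p'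
    simp only [mem_preimage, mem_singleton_iff]
    refine ⟨fun h => Subtype.ext (Prod.ext h ?_), fun h => h ▸ rfl⟩
    rw [eq_itinerary_of_mem_itineraryGraphClosure T U hU p'.2 (h ▸ hp),
      eq_itinerary_of_mem_itineraryGraphClosure T U hU p.2 hp, h]

end Itinerary

/-- **Theorem A.5.** Every t.d.s. `(X,T)` has an almost one to one zero dimensional
extension; if `(X,T)` is minimal, the extension is minimal. -/
theorem zero_dimensional_almost_one_to_one_extension
    {X : Type*} [MetricSpace X] [CompactSpace X] (T : X ≃ₜ X) :
    ∃ (X' : Type) (_ : MetricSpace X') (_ : CompactSpace X') (T' : X' ≃ₜ X')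
      (τ : X' → X),
      Continuous τ ∧ Surjective τ ∧ (∀ x', τ (T' x') = T (τ x')) ∧
      AlmostOneToOne τ ∧
      TopologicalSpace.IsTopologicalBasis {s : Set X' | IsClopen s} ∧
      (IsMinimalTDS T → IsMinimalTDS T') := by
  obtain ⟨U, hU, hsep⟩ := exists_nat_isOpen_separating X
  set Y := itineraryGraphClosure T U
  have : CompactSpace Y := isCompact_iff_compactSpace.mp isClosed_closure.isCompact
  set π : Y → X := fun p => p.1.1
  have hπ : Continuous π := by fun_prop
  -- The second coordinate embeds `Y` into `ℤ × ℕ → Bool`, which brings it down to `Type`.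
  set e : Y → ℤ × ℕ → Bool := fun p => p.1.2
  have he : Continuous e := by fun_prop
  let g : Y ≃ₜ range e := Continuous.homeoOfEquivCompactToT2 (f := Equiv.ofInjective e
    (injOn_iff_injective.mp (injOn_snd_itineraryGraphClosure T U hU hsep))) he.rangeFactorization
  have : CompactSpace (range e) := isCompact_iff_compactSpace.mp (isCompact_range he)
  let : MetricSpace (range e) := TopologicalSpace.metrizableSpaceMetric _
  set T' := (g.symm.trans (itineraryGraphClosure.prodShift T U)).trans g
  have hsemi : Semiconj (π ∘ g.symm) T' T := fun z => by simp [T', π]; rfl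
  have hone : AlmostOneToOne (π ∘ g.symm) :=
    (almostOneToOne_fst_itineraryGraphClosure T U hU).comp_homeomorph g.symm
  have hsurj : Surjective π := fun x => by
    obtain ⟨p, hp, rfl⟩ := (image_fst_itineraryGraphClosure T U hU).symm ▸ mem_univ x
    exact ⟨⟨p, hp⟩, rfl⟩
  exact ⟨range e, inferInstance, inferInstance, T', π ∘ g.symm, hπ.comp g.symm.continuous,
    hsurj.comp g.symm.surjective, hsemi, hone, loc_compact_Haus_tot_disc_of_zero_dim,
    fun hT => hT.of_almostOneToOne (hπ.comp g.symm.continuous) hsemi hone⟩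
end

section
/- Let X be a compact metric space. For every δ > 0 there exists an admissible cover α of X such that every element of α is nonempty and has diameter less than δ. -/
/-!
Cover `X` by finitely many closed balls `D i` of radius `δ / 4`. The open sets
`V i = interior (D i \ ⋃ j < i, D j)` are pairwise disjoint, and their union contains every point
outside the nowhere dense set `⋃ i, frontier (D i)` (take the least `i` with `x ∈ D i`), so it is
dense. Hence the closures of the `V i` cover `X`; they meet only in their frontiers because closures
of disjoint open sets do, and frontiers of closed sets are nowhere dense. Empty pieces are dropped.
-/

open Filter Topology Function Set

/-- A finite family `A` of subsets of `X` is an admissible cover: the sets are closed,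
cover `X`, intersect pairwise only in their boundaries, and the union of their
boundaries has empty interior. -/
def IsAdmissibleCover {X : Type*} [TopologicalSpace X] {ι : Type*} (A : ι → Set X) : Prop :=
  (⋃ i, A i) = Set.univ ∧ (∀ i, IsClosed (A i)) ∧
  (∀ i j, i ≠ j → A i ∩ A j = frontier (A i) ∩ frontier (A j)) ∧
  interior (⋃ i, frontier (A i)) = ∅

section

variable {X : Type*} [TopologicalSpace X]

theorem interior_iUnion_eq_empty_of_finite {ι : Type*} [Finite ι] {f : ι → Set X}
    (hf : ∀ i, IsClosed (f i)) (h : ∀ i, interior (f i) = ∅) : interior (⋃ i, f i) = ∅ := by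
  classical
  cases nonempty_fintype ι
  suffices ∀ s : Finset ι, interior (⋃ i ∈ s, f i) = ∅ by simpa using this Finset.univ
  intro s
  induction s using Finset.induction_on with
  | empty => simp
  | insert a s _ ih =>
    rw [Finset.set_biUnion_insert, union_comm,
      interior_union_isClosed_of_interior_empty (isClosed_biUnion_finset fun i _ => hf i) (h a), ih]

theorem closure_inter_closure_subset_frontier {U V : Set X} (hV : IsOpen V) (h : Disjoint U V) :
    closure U ∩ closure V ⊆ frontier (closure U) := by
  rintro x ⟨hxU, hxV⟩
  refine ⟨by rwa [closure_closure], fun hx => ?_⟩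
  have : Disjoint (interior (closure U)) (closure V) :=
    ((h.closure_left hV).mono_left interior_subset).closure_right isOpen_interior
  exact this.notMem_of_mem_left hx hxV

theorem isAdmissibleCover_closure {ι : Type*} [Finite ι] {V : ι → Set X}
    (hV : ∀ i, IsOpen (V i)) (hdisj : Pairwise (Disjoint on V)) (hdense : Dense (⋃ i, V i)) :
    IsAdmissibleCover fun i => closure (V i) := by
  refine ⟨?_, fun _ => isClosed_closure, fun i j hij => ?_, ?_⟩
  · rw [← closure_iUnion_of_finite, hdense.closure_eq]
  · refine Subset.antisymm (subset_inter (closure_inter_closure_subset_frontier (hV j) (hdisj hij))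
      ?_) (inter_subset_inter isClosed_closure.frontier_subset isClosed_closure.frontier_subset)
    rw [inter_comm]
    exact closure_inter_closure_subset_frontier (hV i) (hdisj hij).symm
  · exact interior_iUnion_eq_empty_of_finite (fun _ => isClosed_frontier)
      (fun _ => interior_frontier isClosed_closure)

theorem IsAdmissibleCover.comp {ι κ : Type*} {A : ι → Set X} (hA : IsAdmissibleCover A)
    {f : κ → ι} (hf : Injective f) (hrange : ∀ i, (A i).Nonempty → i ∈ range f) :
    IsAdmissibleCover (A ∘ f) := by
  obtain ⟨hcover, hclosed, hinter, hfrontier⟩ := hA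
  refine ⟨eq_univ_of_forall fun x => ?_, fun _ => hclosed _, fun _ _ h => hinter _ _ (hf.ne h),
    eq_empty_of_subset_empty ?_⟩
  · obtain ⟨i, hxi⟩ := mem_iUnion.1 (hcover.symm ▸ mem_univ x)
    obtain ⟨m, rfl⟩ := hrange i ⟨x, hxi⟩
    exact mem_iUnion.2 ⟨m, hxi⟩
  · exact hfrontier ▸ interior_mono (iUnion_subset fun m => subset_iUnion (frontier ∘ A) (f m))

theorem IsAdmissibleCover.exists_fin_nonempty {ι : Type*} [Finite ι] {A : ι → Set X}
    (hA : IsAdmissibleCover A) :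
    ∃ (k : ℕ) (B : Fin k → Set X), IsAdmissibleCover B ∧ ∀ m, (B m).Nonempty ∧ ∃ i, B m = A i :=
  let e := Finite.equivFin {i // (A i).Nonempty}
  ⟨_, A ∘ Subtype.val ∘ e.symm,
    hA.comp (Subtype.val_injective.comp e.symm.injective) fun i hi => ⟨e ⟨i, hi⟩, by simp⟩,
    fun m => ⟨(e.symm m).2, _, rfl⟩⟩

variable {ι : Type*} [LinearOrder ι] [LocallyFiniteOrderBot ι] [Finite ι]

theorem dense_iUnion_interior_disjointed {D : ι → Set X} (hD : ∀ i, IsClosed (D i))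
    (hcover : ⋃ i, D i = univ) : Dense (⋃ i, interior (disjointed D i)) := by
  have hfrontier : interior (⋃ i, frontier (D i)) = ∅ :=
    interior_iUnion_eq_empty_of_finite (fun _ => isClosed_frontier)
      (fun i => interior_frontier (hD i))
  refine (interior_eq_empty_iff_dense_compl.1 hfrontier).mono fun x hx => ?_
  simp only [mem_compl_iff, mem_iUnion, not_exists] at hx
  obtain ⟨i, hxi, hmin⟩ := wellFounded_lt.has_min {i | x ∈ D i}
    (mem_iUnion.1 (hcover.symm ▸ mem_univ x))
  have hinterior : x ∈ interior (D i) := by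
    by_contra hxi'
    exact hx i ((hD i).frontier_eq ▸ ⟨hxi, hxi'⟩)
  have hopen : IsOpen (⋂ j < i, (D j)ᶜ) :=
    (finite_Iio i).isOpen_biInter fun j _ => (hD j).isOpen_compl
  refine mem_iUnion.2 ⟨i, ?_⟩
  rw [disjointed_eq_inter_compl, interior_inter, hopen.interior_eq]
  exact ⟨hinterior, mem_iInter₂.2 fun j hj hxj => hmin j hxj hj⟩

theorem exists_isAdmissibleCover_subset {D : ι → Set X} (hD : ∀ i, IsClosed (D i))
    (hcover : ⋃ i, D i = univ) : ∃ A : ι → Set X, IsAdmissibleCover A ∧ ∀ i, A i ⊆ D i :=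
  ⟨fun i => closure (interior (disjointed D i)),
    isAdmissibleCover_closure (fun _ => isOpen_interior)
      ((disjoint_disjointed D).mono fun _ _ h => h.mono interior_subset interior_subset)
      (dense_iUnion_interior_disjointed hD hcover),
    fun i => closure_minimal (interior_subset.trans (disjointed_subset D i)) (hD i)⟩


end

theorem exists_fin_closedBall_cover {X : Type*} [PseudoMetricSpace X] [CompactSpace X] {r : ℝ}
    (hr : 0 < r) : ∃ (n : ℕ) (c : Fin n → X), ⋃ i, Metric.closedBall (c i) r = univ := by
  obtain ⟨t, -, ht, hcover⟩ := finite_cover_balls_of_compact (isCompact_univ (X := X)) hr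
  obtain ⟨n, c, rfl⟩ := ht.fin_embedding
  refine ⟨n, c, eq_univ_of_univ_subset (hcover.trans ?_)⟩
  rw [biUnion_range]
  exact iUnion_mono fun i => Metric.ball_subset_closedBall

/-- **Lemma A.3.** In a compact metric space, for every `δ > 0` there is an admissible
cover all of whose elements are nonempty and of diameter less than `δ`. -/
theorem exists_admissible_cover_of_small_diam
    {X : Type*} [MetricSpace X] [CompactSpace X] (δ : ℝ) (hδ : 0 < δ) :
    ∃ (k : ℕ) (A : Fin k → Set X), IsAdmissibleCover A ∧
      ∀ i, (A i).Nonempty ∧ Metric.diam (A i) < δ := by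
  have hr : 0 < δ / 4 := by positivity
  obtain ⟨n, c, hc⟩ := exists_fin_closedBall_cover (X := X) hr
  obtain ⟨B, hB, hBc⟩ := exists_isAdmissibleCover_subset (fun _ => Metric.isClosed_closedBall) hc
  obtain ⟨k, A, hA, hAB⟩ := hB.exists_fin_nonempty
  refine ⟨k, A, hA, fun m => ⟨(hAB m).1, ?_⟩⟩
  obtain ⟨i, hi⟩ := (hAB m).2
  calc Metric.diam (A m) ≤ Metric.diam (Metric.closedBall (c i) (δ / 4)) :=
        Metric.diam_mono (hi ▸ hBc i) Metric.isBounded_closedBall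
    _ ≤ 2 * (δ / 4) := Metric.diam_closedBall hr.le
    _ < δ := by linarith
end

section
/- Let X be a compact metric space. If α and β are admissible covers of X, then their join α ∨ β (the cover consisting of all nonempty sets A ∩ B with A ∈ α and B ∈ β) is also an admissible cover of X. -/
open Filter Topology Function Set

/-! For closed sets, meeting only in the boundaries means that neither set meets the interior
of the other; since `interior (A i ∩ B j) = interior (A i) ∩ interior (B j)`, two distinct
pieces of the join inherit this from `A` or from `B`. The boundaries of the join lie in the
union of the boundaries of `A` and of `B`, and the union of a closed set with empty interior
and a set with empty interior has empty interior. -/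

section

variable {X : Type*} [TopologicalSpace X]

theorem IsClosed.inter_eq_frontier_inter_frontier_iff {C D : Set X} (hC : IsClosed C)
    (hD : IsClosed D) :
    C ∩ D = frontier C ∩ frontier D ↔ Disjoint (interior C) D ∧ Disjoint C (interior D) := by
  rw [hC.frontier_eq, hD.frontier_eq, Set.disjoint_left, Set.disjoint_left]
  constructor
  · intro h
    exact ⟨fun x hxC hxD => (h.subset ⟨interior_subset hxC, hxD⟩).1.2 hxC,
      fun x hxC hxD => (h.subset ⟨hxC, interior_subset hxD⟩).2.2 hxD⟩
  · rintro ⟨hCD, hDC⟩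
    ext x
    exact ⟨fun ⟨hxC, hxD⟩ => ⟨⟨hxC, fun h => hCD h hxD⟩, ⟨hxD, hDC hxC⟩⟩,
      fun ⟨hxC, hxD⟩ => ⟨hxC.1, hxD.1⟩⟩

variable {ι κ : Type*} {A : ι → Set X} {B : κ → Set X}

theorem IsAdmissibleCover.disjoint_interior (hA : IsAdmissibleCover A) {i j : ι} (hij : i ≠ j) :
    Disjoint (interior (A i)) (A j) :=
  ((hA.2.1 i).inter_eq_frontier_inter_frontier_iff (hA.2.1 j)).1 (hA.2.2.1 i j hij) |>.1

theorem IsAdmissibleCover.disjoint_interior_join (hA : IsAdmissibleCover A)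
    (hB : IsAdmissibleCover B) {p q : ι × κ} (hpq : p ≠ q) :
    Disjoint (interior (A p.1 ∩ B p.2)) (A q.1 ∩ B q.2) := by
  rw [interior_inter]
  by_cases h₁ : p.1 = q.1
  · have h₂ : p.2 ≠ q.2 := fun h₂ => hpq (Prod.ext h₁ h₂)
    exact (hB.disjoint_interior h₂).mono inter_subset_right inter_subset_right
  · exact (hA.disjoint_interior h₁).mono inter_subset_left inter_subset_left

theorem iUnion_frontier_inter_subset (A : ι → Set X) (B : κ → Set X) :
    ⋃ p : ι × κ, frontier (A p.1 ∩ B p.2) ⊆ (⋃ i, frontier (A i)) ∪ ⋃ j, frontier (B j) := by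
  refine iUnion_subset fun p => (frontier_inter_subset _ _).trans ?_
  exact union_subset_union
    (inter_subset_left.trans (subset_iUnion (fun i => frontier (A i)) p.1))
    (inter_subset_right.trans (subset_iUnion (fun j => frontier (B j)) p.2))

theorem IsAdmissibleCover.join [Finite ι] (hA : IsAdmissibleCover A) (hB : IsAdmissibleCover B) :
    IsAdmissibleCover (fun p : ι × κ => A p.1 ∩ B p.2) := by
  have ⟨hAcov, hAclosed, _, hAint⟩ := hA
  have ⟨hBcov, hBclosed, _, hBint⟩ := hB
  have hclosed (p : ι × κ) : IsClosed (A p.1 ∩ B p.2) := (hAclosed p.1).inter (hBclosed p.2)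
  refine ⟨?_, hclosed, fun p q hpq => ?_, ?_⟩
  · rw [iUnion_prod' (fun p : ι × κ => A p.1 ∩ B p.2), ← iUnion_inter_iUnion, hAcov, hBcov,
      univ_inter]
  · exact ((hclosed p).inter_eq_frontier_inter_frontier_iff (hclosed q)).2
      ⟨hA.disjoint_interior_join hB hpq, (hA.disjoint_interior_join hB hpq.symm).symm⟩
  · have hAfr : IsClosed (⋃ i, frontier (A i)) :=
      isClosed_iUnion_of_finite fun _ => isClosed_frontier
    refine subset_empty_iff.1 ((interior_mono (iUnion_frontier_inter_subset A B)).trans ?_)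
    rw [interior_union_isClosed_of_interior_empty hAfr hBint, hAint]

end

theorem isAdmissibleCover_join_general
    {X : Type*} [MetricSpace X] {k l : ℕ}
    (A : Fin k → Set X) (B : Fin l → Set X)
    (hA : IsAdmissibleCover A) (hB : IsAdmissibleCover B) :
    IsAdmissibleCover (fun ij : Fin k × Fin l => A ij.1 ∩ B ij.2) :=
  hA.join hB

/-- **Lemma A.4.** The join of two admissible covers of a compact metric space is
admissible. -/
theorem isAdmissibleCover_join
    {X : Type*} [MetricSpace X] [CompactSpace X] {k l : ℕ}
    (A : Fin k → Set X) (B : Fin l → Set X)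
    (hA : IsAdmissibleCover A) (hB : IsAdmissibleCover B) :
    IsAdmissibleCover (fun ij : Fin k × Fin l => A ij.1 ∩ B ij.2) :=
  isAdmissibleCover_join_general A B hA hB
end
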